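/- Let S₁₁, …, S₁ₙ be bounded operators on a complex Hilbert space H. The numerical radius of the n×n block operator matrix whose first row is (S₁₁, S₁₂, …, S₁ₙ), whose first column is (S₁₁, S₁₂, …, S₁ₙ)ᵀ, and all other entries zero, is at most (1/2)[w(S₁₁) + √(w(S₁₁)² + 4∑_{k=2}^{n} w(S₁ₖ)²)]. -/

import Mathlib

noncomputable def numRadius {E : Type*} [NormedAddCommGroup E] [InnerProductSpace ℂ E]
    (T : E →L[ℂ] E) : ℝ :=
  sSup {r : ℝ | ∃ x : E, ‖x‖ = 1 ∧ r = ‖(inner ℂ (T x) x : ℂ)‖}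

noncomputable def blockOp {H : Type*} [NormedAddCommGroup H] [InnerProductSpace ℂ H]
    (n : ℕ) (M : Fin n → Fin n → H →L[ℂ] H) :
    (PiLp 2 fun _ : Fin n => H) →L[ℂ] (PiLp 2 fun _ : Fin n => H) :=
  (PiLp.continuousLinearEquiv 2 ℂ (fun _ : Fin n => H)).symm.toContinuousLinearMap ∘L
    (ContinuousLinearMap.pi fun i => ∑ j, (M i j).comp (ContinuousLinearMap.proj j)) ∘L
    (PiLp.continuousLinearEquiv 2 ℂ (fun _ : Fin n => H)).toContinuousLinearMap

/-!
For a unit vector `x = (x₁, …, xₙ)` of `Hⁿ`, the quadratic form of the block operator `B` is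
`⟪B x, x⟫ = ⟪S₁₁ x₁, x₁⟫ + ∑_{k ≥ 2} (⟪S₁ₖ xₖ, x₁⟫ + ⟪S₁ₖ x₁, xₖ⟫)`.
Polarization gives `|⟪T u, v⟫ + ⟪T v, u⟫| ≤ w(T) (‖u‖² + ‖v‖²)`, and applying this to
`(‖v‖ u, ‖u‖ v)` improves it to `2 w(T) ‖u‖ ‖v‖`. With Cauchy–Schwarz this yields
`|⟪B x, x⟫| ≤ w₁ a² + 2 W a b`, where `a = ‖x₁‖`, `a² + b² = 1`, `w₁ = w(S₁₁)` and
`W² = ∑_{k ≥ 2} w(S₁ₖ)²`. The claimed bound is the largest eigenvalue of the symmetric matrix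
`[[w₁, W], [W, 0]]`, which dominates this quadratic form on the unit circle.
-/

open scoped InnerProductSpace

section NumericalRadius

variable {E : Type*} [NormedAddCommGroup E] [InnerProductSpace ℂ E] (T : E →L[ℂ] E)

lemma bddAbove_numRadius_set :
    BddAbove {r : ℝ | ∃ x : E, ‖x‖ = 1 ∧ r = ‖⟪T x, x⟫_ℂ‖} := by
  refine ⟨‖T‖, ?_⟩
  rintro r ⟨x, hx, rfl⟩
  calc ‖⟪T x, x⟫_ℂ‖ ≤ ‖T x‖ * ‖x‖ := norm_inner_le_norm _ _
    _ ≤ ‖T‖ * ‖x‖ * ‖x‖ := by gcongr; exact T.le_opNorm x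
    _ = ‖T‖ := by rw [hx]; ring

lemma numRadius_nonneg : 0 ≤ numRadius T :=
  Real.sSup_nonneg (by rintro r ⟨x, -, rfl⟩; positivity)

lemma numRadius_le_of_forall {c : ℝ} (hc : 0 ≤ c)
    (h : ∀ x : E, ‖x‖ = 1 → ‖⟪T x, x⟫_ℂ‖ ≤ c) : numRadius T ≤ c :=
  Real.sSup_le (by rintro r ⟨x, hx, rfl⟩; exact h x hx) hc

lemma norm_inner_self_le_numRadius (u : E) : ‖⟪T u, u⟫_ℂ‖ ≤ numRadius T * ‖u‖ ^ 2 := by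
  rcases eq_or_ne u 0 with rfl | hu
  · simp
  set v : E := (‖u‖ : ℂ)⁻¹ • u
  have hv : ‖v‖ = 1 := norm_smul_inv_norm hu
  have hu_eq : u = ((‖u‖ : ℝ) : ℂ) • v := by
    simp [v, smul_smul, hu]
  have hwv : ‖⟪T v, v⟫_ℂ‖ ≤ numRadius T := le_csSup (bddAbove_numRadius_set T) ⟨v, hv, rfl⟩
  calc ‖⟪T u, u⟫_ℂ‖ = ‖u‖ ^ 2 * ‖⟪T v, v⟫_ℂ‖ := by
        conv_lhs => rw [hu_eq]
        rw [map_smul, inner_smul_left, inner_smul_right, norm_mul, norm_mul, Complex.norm_conj,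
          Complex.norm_real, norm_norm]
        ring
    _ ≤ numRadius T * ‖u‖ ^ 2 := by rw [mul_comm]; gcongr

lemma norm_inner_add_inner_le_numRadius_mul (u v : E) :
    ‖⟪T u, v⟫_ℂ + ⟪T v, u⟫_ℂ‖ ≤ numRadius T * (‖u‖ ^ 2 + ‖v‖ ^ 2) := by
  have polarization : ⟪T u, v⟫_ℂ + ⟪T v, u⟫_ℂ =
      (1 / 2 : ℂ) * (⟪T (u + v), u + v⟫_ℂ - ⟪T (u - v), u - v⟫_ℂ) := by
    simp only [map_add, map_sub, inner_add_left, inner_add_right, inner_sub_left, inner_sub_right]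
    ring
  calc ‖⟪T u, v⟫_ℂ + ⟪T v, u⟫_ℂ‖
      ≤ (1 / 2) * (‖⟪T (u + v), u + v⟫_ℂ‖ + ‖⟪T (u - v), u - v⟫_ℂ‖) := by
        rw [polarization, norm_mul, norm_div, norm_one, Complex.norm_ofNat]
        gcongr
        exact norm_sub_le _ _
    _ ≤ (1 / 2) * (numRadius T * ‖u + v‖ ^ 2 + numRadius T * ‖u - v‖ ^ 2) := by
        gcongr <;> exact norm_inner_self_le_numRadius T _
    _ = numRadius T * (‖u‖ ^ 2 + ‖v‖ ^ 2) := by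
        linear_combination (numRadius T / 2) * parallelogram_law_with_norm ℂ u v

lemma norm_inner_add_inner_le_two_mul_numRadius (u v : E) :
    ‖⟪T u, v⟫_ℂ + ⟪T v, u⟫_ℂ‖ ≤ 2 * numRadius T * ‖u‖ * ‖v‖ := by
  rcases eq_or_ne u 0 with rfl | hu
  · simp
  rcases eq_or_ne v 0 with rfl | hv
  · simp
  have huv : 0 < ‖u‖ * ‖v‖ := by positivity
  have h := norm_inner_add_inner_le_numRadius_mul T ((‖v‖ : ℂ) • u) ((‖u‖ : ℂ) • v)
  have hscale : ⟪T ((‖v‖ : ℂ) • u), (‖u‖ : ℂ) • v⟫_ℂ + ⟪T ((‖u‖ : ℂ) • v), (‖v‖ : ℂ) • u⟫_ℂ =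
      ((‖u‖ * ‖v‖ : ℝ) : ℂ) * (⟪T u, v⟫_ℂ + ⟪T v, u⟫_ℂ) := by
    simp only [map_smul, inner_smul_left, inner_smul_right, Complex.conj_ofReal]
    push_cast
    ring
  rw [hscale, norm_mul, Complex.norm_real, Real.norm_of_nonneg huv.le, norm_smul, norm_smul,
    Complex.norm_real, Complex.norm_real, norm_norm, norm_norm] at h
  nlinarith

end NumericalRadius

lemma mul_sq_add_two_mul_le_half_add_sqrt (w W a b : ℝ) (hab : a ^ 2 + b ^ 2 = 1) :
    w * a ^ 2 + 2 * W * a * b ≤ (1 / 2) * (w + √(w ^ 2 + 4 * W ^ 2)) := by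
  set s := √(w ^ 2 + 4 * W ^ 2)
  have hs : s ^ 2 = w ^ 2 + 4 * W ^ 2 := Real.sq_sqrt (by positivity)
  have hs0 : 0 ≤ s := Real.sqrt_nonneg _
  have hsos : 2 * s * ((s - w) * a ^ 2 - 4 * W * a * b + (s + w) * b ^ 2) =
      (2 * W * a - (s + w) * b) ^ 2 + ((s - w) * a - 2 * W * b) ^ 2 := by
    linear_combination (a ^ 2 + b ^ 2) * hs
  have hQ : 0 ≤ (s - w) * a ^ 2 - 4 * W * a * b + (s + w) * b ^ 2 := by
    rcases hs0.eq_or_lt with hs0 | hs0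
    · have hw : w = 0 := by nlinarith
      have hW : W = 0 := by nlinarith
      simp [hw, hW, ← hs0]
    · exact nonneg_of_mul_nonneg_right (by rw [hsos]; positivity) (by positivity : 0 < 2 * s)
  linear_combination (1 / 2 : ℝ) * hQ + (1 / 2) * (w + s) * hab

section ArrowBlock

open Finset

variable {H : Type*} [NormedAddCommGroup H] [InnerProductSpace ℂ H] {n : ℕ}

lemma blockOp_apply (M : Fin n → Fin n → H →L[ℂ] H) (x : PiLp 2 fun _ : Fin n => H) (i : Fin n) :
    blockOp n M x i = ∑ j, M i j (x j) := by
  simp [blockOp]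

variable [NeZero n] (S : Fin n → H →L[ℂ] H) (x : PiLp 2 fun _ : Fin n => H)

def arrowEntries : Fin n → Fin n → H →L[ℂ] H :=
  fun i j => if i = 0 then S j else if j = 0 then S i else 0

lemma blockOp_arrowEntries_apply_zero : blockOp n (arrowEntries S) x 0 = ∑ j, S j (x j) := by
  simp [blockOp_apply, arrowEntries]

lemma blockOp_arrowEntries_apply_of_ne_zero {i : Fin n} (hi : i ≠ 0) :
    blockOp n (arrowEntries S) x i = S i (x 0) := by
  rw [blockOp_apply, Finset.sum_eq_single 0 (fun j _ hj => by simp [arrowEntries, hi, hj])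
    (by simp)]
  simp [arrowEntries, hi]

lemma inner_blockOp_arrowEntries_self :
    ⟪blockOp n (arrowEntries S) x, x⟫_ℂ = ⟪S 0 (x 0), x 0⟫_ℂ +
      ∑ k ∈ univ.erase 0, (⟪S k (x k), x 0⟫_ℂ + ⟪S k (x 0), x k⟫_ℂ) := by
  rw [PiLp.inner_apply, ← add_sum_erase _ _ (mem_univ 0), blockOp_arrowEntries_apply_zero,
    sum_inner, ← add_sum_erase _ _ (mem_univ 0), sum_add_distrib, add_assoc]
  congr 2
  refine sum_congr rfl fun k hk => ?_
  rw [blockOp_arrowEntries_apply_of_ne_zero S x (ne_of_mem_erase hk)]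

lemma norm_inner_blockOp_arrowEntries_self_le :
    ‖⟪blockOp n (arrowEntries S) x, x⟫_ℂ‖ ≤ numRadius (S 0) * ‖x 0‖ ^ 2 +
      2 * ‖x 0‖ * ∑ k ∈ univ.erase 0, numRadius (S k) * ‖x k‖ := by
  rw [inner_blockOp_arrowEntries_self, mul_sum]
  refine (norm_add_le _ _).trans (add_le_add (norm_inner_self_le_numRadius _ _)
    ((norm_sum_le _ _).trans (sum_le_sum fun k _ => ?_)))
  linarith [norm_inner_add_inner_le_two_mul_numRadius (S k) (x k) (x 0)]

end ArrowBlock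

variable {H : Type*} [NormedAddCommGroup H] [InnerProductSpace ℂ H]
theorem stmt16 (n : ℕ) [NeZero n] (S : Fin n → H →L[ℂ] H) :
    numRadius (blockOp n (fun i j =>
        if i = 0 then S j else if j = 0 then S i else 0)) ≤
      (1 / 2) * (numRadius (S 0) +
        Real.sqrt (numRadius (S 0) ^ 2 +
          4 * ∑ k ∈ Finset.univ.erase (0 : Fin n), numRadius (S k) ^ 2)) := by
  set W := ∑ k ∈ Finset.univ.erase (0 : Fin n), numRadius (S k) ^ 2
  have hW : 0 ≤ W := Finset.sum_nonneg fun k _ => sq_nonneg _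
  refine numRadius_le_of_forall _ (by positivity [numRadius_nonneg (S 0)]) fun x hx => ?_
  set b := √(∑ k ∈ Finset.univ.erase 0, ‖x k‖ ^ 2)
  have hunit : ‖x 0‖ ^ 2 + b ^ 2 = 1 := by
    rw [Real.sq_sqrt (Finset.sum_nonneg fun k _ => sq_nonneg _),
      Finset.add_sum_erase _ (fun i => ‖x i‖ ^ 2) (Finset.mem_univ 0), ← PiLp.norm_sq_eq_of_L2, hx,
      one_pow]
  calc _ ≤ numRadius (S 0) * ‖x 0‖ ^ 2 +
        2 * ‖x 0‖ * ∑ k ∈ Finset.univ.erase 0, numRadius (S k) * ‖x k‖ :=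
        norm_inner_blockOp_arrowEntries_self_le S x
    _ ≤ numRadius (S 0) * ‖x 0‖ ^ 2 + 2 * √W * ‖x 0‖ * b := by
        nlinarith [Real.sum_mul_le_sqrt_mul_sqrt (Finset.univ.erase 0) (fun k => numRadius (S k))
          (fun k => ‖x k‖), norm_nonneg (x 0)]
    _ ≤ _ := by
        simpa [Real.sq_sqrt hW] using
          mul_sq_add_two_mul_le_half_add_sqrt (numRadius (S 0)) (√W) (‖x 0‖) b hunit
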